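/- The jump of the Cauchy representation is continuously equivalent to the naive Cauchy representation: (i) there exists a continuous function F, defined on the set of all (ρ∘ι')-names of real numbers, such that for every x ∈ ℝ and every (ρ∘ι')-name q of x, F(q) is a ρ'-name of x; and (ii) there exists a continuous function G, defined on the set of all ρ'-names of real numbers, such that for every x ∈ ℝ and every ρ'-name q of x, G(q) is a (ρ∘ι')-name of x. -/
import Mathlib


open Filter Topology

/- The name space `ℕ → ℚ` carries the product topology with `ℚ` discrete. -/
local instance : TopologicalSpace ℚ := ⊥

/-- ρ-name of a real: `|x - q n| ≤ 2^{-n}` for all `n`. -/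
def IsRhoName (q : ℕ → ℚ) (x : ℝ) : Prop :=
  ∀ n : ℕ, |x - (q n : ℝ)| ≤ (2 : ℝ) ^ (-(n : ℤ))

/-- A ρ'-name (naive Cauchy name) of `x`: a rational sequence converging to `x`. -/
def IsRhoPrimeName (q : ℕ → ℚ) (x : ℝ) : Prop :=
  Filter.Tendsto (fun n => ((q n : ℝ))) Filter.atTop (nhds x)

/-- A (ρ∘ι')-name of `x`: a double sequence (via `Nat.pair`) each of whose rows is
eventually constant, the sequence of row limits being a ρ-name of `x`. -/
def IsRhoJumpName (q : ℕ → ℚ) (x : ℝ) : Prop :=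
  ∃ z : ℕ → ℚ, (∀ n : ℕ, ∃ M : ℕ, ∀ m : ℕ, M ≤ m → q (Nat.pair n m) = z n) ∧ IsRhoName z x

open Classical in

lemma stmt4_findGreatest_congr {P Q : ℕ → Prop} [DecidablePred P] [DecidablePred Q] :
    ∀ {k : ℕ}, (∀ n, n ≤ k → (P n ↔ Q n)) → Nat.findGreatest P k = Nat.findGreatest Q k
  | 0, _ => rfl
  | (k+1), h => by
      rw [Nat.findGreatest_succ, Nat.findGreatest_succ]
      by_cases hp : P (k+1)
      · rw [if_pos hp, if_pos ((h _ le_rfl).mp hp)]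
      · rw [if_neg hp, if_neg fun hq => hp ((h _ le_rfl).mpr hq)]
        exact stmt4_findGreatest_congr fun n hn => h n (hn.trans (Nat.le_succ k))

lemma stmt4_find_congr {P Q : ℕ → Prop} [DecidablePred P] [DecidablePred Q]
    (hP : ∃ n, P n) (hQ : ∃ n, Q n) (h : ∀ n, P n ↔ Q n) : Nat.find hP = Nat.find hQ :=
  le_antisymm (Nat.find_min' hP ((h _).mpr (Nat.find_spec hQ)))
    (Nat.find_min' hQ ((h _).mp (Nat.find_spec hP)))

lemma stmt4_cont {F : (ℕ → ℚ) → ℕ → ℚ}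
    (h : ∀ k, ∃ (N : ℕ) (e : ℕ → ℕ), ∀ q q' : ℕ → ℚ,
      (∀ i, i ≤ N → q (e i) = q' (e i)) → F q k = F q' k) :
    Continuous F := by
  haveI : DiscreteTopology ℚ := ⟨rfl⟩
  refine continuous_pi fun k => ?_
  obtain ⟨N, e, hspec⟩ := h k
  classical
  set rep : (Fin (N+1) → ℚ) → (ℕ → ℚ) := fun v j =>
    if h : ∃ i : Fin (N+1), e i = j then v h.choose else 0 with hrep
  have key : (fun q => F q k)
      = (fun v : Fin (N+1) → ℚ => F (rep v) k) ∘ (fun q (i : Fin (N+1)) => q (e i)) := by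
    funext q
    refine (hspec q (rep fun i : Fin (N+1) => q (e i)) ?_)
    intro i hi
    have hex : ∃ i' : Fin (N+1), e i' = e i := ⟨⟨i, by omega⟩, rfl⟩
    simp only [hrep, dif_pos hex]
    rw [hex.choose_spec]
  rw [key]
  exact continuous_of_discreteTopology.comp (continuous_pi fun i => continuous_apply (e i))

lemma stmt4_monotone_nat_eventually_const {t : ℕ → ℕ} (mono : Monotone t) {T : ℕ}
    (hb : ∀ m, t m ≤ T) : ∃ N, ∀ m, N ≤ m → t m = t N := by
  have hne : (Set.range t).Nonempty := ⟨t 0, 0, rfl⟩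
  have hbdd : BddAbove (Set.range t) := ⟨T, by rintro _ ⟨m, rfl⟩; exact hb m⟩
  obtain ⟨N, hN⟩ := Nat.sSup_mem hne hbdd
  exact ⟨N, fun m hm => le_antisymm (hN ▸ le_csSup hbdd ⟨m, rfl⟩) (mono hm)⟩

noncomputable def stmt4_g (q : ℕ → ℚ) (k : ℕ) : ℕ :=
  Nat.findGreatest
    (fun n => ∀ i, i ≤ n →
      |q (Nat.pair i k) - q (Nat.pair n k)| ≤ (2:ℚ)^(-(i:ℤ)) + (2:ℚ)^(-(n:ℤ))) k

noncomputable def stmt4_F (q : ℕ → ℚ) (k : ℕ) : ℚ := q (Nat.pair (stmt4_g q k) k)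

lemma stmt4_F_coords (k : ℕ) (q q' : ℕ → ℚ)
    (h : ∀ i, i ≤ k → q (Nat.pair i k) = q' (Nat.pair i k)) : stmt4_F q k = stmt4_F q' k := by
  have hg : stmt4_g q k = stmt4_g q' k := by
    refine stmt4_findGreatest_congr fun n hn => ?_
    constructor <;> intro hP i hi <;>
      [rw [← h i (hi.trans hn), ← h n hn]; rw [h i (hi.trans hn), h n hn]] <;> exact hP i hi
  rw [stmt4_F, stmt4_F, hg]
  exact h _ (by unfold stmt4_g; exact Nat.findGreatest_le k)

lemma stmt4_two_zpow_anti {a b : ℕ} (h : a ≤ b) : (2:ℝ)^(-(b:ℤ)) ≤ (2:ℝ)^(-(a:ℤ)) :=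
  zpow_le_zpow_right₀ one_le_two (by omega)

lemma stmt4_F_correct (x : ℝ) (q : ℕ → ℚ)
    (z : ℕ → ℚ) (hM : ∀ n, ∃ M, ∀ m, M ≤ m → q (Nat.pair n m) = z n) (hz : IsRhoName z x) :
    Tendsto (fun k => ((stmt4_F q k : ℚ) : ℝ)) atTop (𝓝 x) := by
  choose M hMs using hM
  rw [Metric.tendsto_atTop]
  intro ε hε
  obtain ⟨m, hm⟩ := exists_pow_lt_of_lt_one (by linarith : (0:ℝ) < ε/3) (by norm_num : (1:ℝ)/2 < 1)
  have h2m : (2:ℝ)^(-(m:ℤ)) < ε/3 := by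
    rw [zpow_neg, zpow_natCast, ← inv_pow, ← one_div]; exact hm
  refine ⟨m + Finset.sup (Finset.range (m+1)) M, fun k hk => ?_⟩
  have hk1 : m ≤ k := le_trans (Nat.le_add_right _ _) hk
  have rows : ∀ i, i ≤ m → q (Nat.pair i k) = z i := by
    intro i hi
    refine hMs i k (le_trans ?_ hk)
    exact le_trans (Finset.le_sup (Finset.mem_range.mpr (by omega))) (Nat.le_add_left _ _)
  have hzz : ∀ i n : ℕ, |(z i : ℝ) - (z n : ℝ)| ≤ (2:ℝ)^(-(i:ℤ)) + (2:ℝ)^(-(n:ℤ)) := by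
    intro i n
    calc |(z i : ℝ) - (z n : ℝ)| = |(x - (z n:ℝ)) - (x - (z i:ℝ))| := by ring_nf
    _ ≤ |x - (z n:ℝ)| + |x - (z i:ℝ)| := abs_sub _ _
    _ ≤ (2:ℝ)^(-(i:ℤ)) + (2:ℝ)^(-(n:ℤ)) := by
        have := hz i; have := hz n; linarith
  have Pm : ∀ i, i ≤ m →
      |q (Nat.pair i k) - q (Nat.pair m k)| ≤ (2:ℚ)^(-(i:ℤ)) + (2:ℚ)^(-(m:ℤ)) := by
    intro i hi
    rw [rows i hi, rows m le_rfl, ← Rat.cast_le (K := ℝ)]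
    push_cast
    exact hzz i m
  have hgm : m ≤ stmt4_g q k := Nat.le_findGreatest hk1 Pm
  have Pg : ∀ i, i ≤ stmt4_g q k →
      |q (Nat.pair i k) - q (Nat.pair (stmt4_g q k) k)|
        ≤ (2:ℚ)^(-(i:ℤ)) + (2:ℚ)^(-(stmt4_g q k:ℤ)) := by
    unfold stmt4_g
    exact Nat.findGreatest_spec
      (P := fun n => ∀ i, i ≤ n →
        |q (Nat.pair i k) - q (Nat.pair n k)| ≤ (2:ℚ)^(-(i:ℤ)) + (2:ℚ)^(-(n:ℤ))) hk1 Pm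
  have key := Pg m hgm
  rw [← Rat.cast_le (K := ℝ)] at key
  push_cast at key
  have hgle : (2:ℝ)^(-(stmt4_g q k:ℤ)) ≤ (2:ℝ)^(-(m:ℤ)) := stmt4_two_zpow_anti hgm
  have hzm : |x - (z m : ℝ)| ≤ (2:ℝ)^(-(m:ℤ)) := hz m
  have hFz : ((stmt4_F q k : ℚ) : ℝ) = (q (Nat.pair (stmt4_g q k) k) : ℝ) := rfl
  rw [Real.dist_eq, hFz]
  have hb : (q (Nat.pair m k) : ℝ) = ((z m : ℚ) : ℝ) := by rw [rows m le_rfl]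
  calc |(q (Nat.pair (stmt4_g q k) k) : ℝ) - x|
      ≤ |(q (Nat.pair (stmt4_g q k) k) : ℝ) - (q (Nat.pair m k) : ℝ)|
        + |(q (Nat.pair m k) : ℝ) - x| := abs_sub_le _ _ _
    _ ≤ ((2:ℝ)^(-(m:ℤ)) + (2:ℝ)^(-(stmt4_g q k:ℤ))) + (2:ℝ)^(-(m:ℤ)) := by
        refine add_le_add ?_ ?_
        · rw [abs_sub_comm]; exact key
        · rw [hb, abs_sub_comm]; exact hzm
    _ < ε := by linarith

lemma stmt4_t_ex (q : ℕ → ℚ) (n m : ℕ) :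
    ∃ t, ∀ j, j ≤ m → t ≤ j → |q j - q t| ≤ (2:ℚ)^(-(n:ℤ)-1) := by
  refine ⟨m, fun j hj hj' => ?_⟩
  have : j = m := le_antisymm hj hj'
  subst this
  simp only [sub_self, abs_zero]
  positivity

noncomputable def stmt4_t (q : ℕ → ℚ) (n m : ℕ) : ℕ := Nat.find (stmt4_t_ex q n m)

noncomputable def stmt4_G (q : ℕ → ℚ) (k : ℕ) : ℚ := q (stmt4_t q k.unpair.1 k.unpair.2)

lemma stmt4_t_le (q : ℕ → ℚ) (n m : ℕ) : stmt4_t q n m ≤ m :=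
  Nat.find_min' _ (fun j hj hj' => by
    have : j = m := le_antisymm hj hj'
    subst this
    simp only [sub_self, abs_zero]
    positivity)

lemma stmt4_t_spec (q : ℕ → ℚ) (n m : ℕ) :
    ∀ j, j ≤ m → stmt4_t q n m ≤ j → |q j - q (stmt4_t q n m)| ≤ (2:ℚ)^(-(n:ℤ)-1) :=
  Nat.find_spec (stmt4_t_ex q n m)

lemma stmt4_t_mono (q : ℕ → ℚ) (n : ℕ) : Monotone (stmt4_t q n) := by
  intro m m' hmm'
  exact Nat.find_min' _ (fun j hj htj => stmt4_t_spec q n m' j (hj.trans hmm') htj)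

lemma stmt4_G_coords (k : ℕ) (q q' : ℕ → ℚ)
    (h : ∀ i, i ≤ k.unpair.2 → q i = q' i) : stmt4_G q k = stmt4_G q' k := by
  set n := k.unpair.1
  set m := k.unpair.2
  have ht : stmt4_t q n m = stmt4_t q' n m := by
    refine stmt4_find_congr _ _ fun t => ?_
    constructor <;> intro hP j hj htj
    · rw [← h j hj, ← h t (htj.trans hj)]; exact hP j hj htj
    · rw [h j hj, h t (htj.trans hj)]; exact hP j hj htj
  rw [stmt4_G, stmt4_G, ht, h _ ((stmt4_t_le q' n m))]

lemma stmt4_G_correct (x : ℝ) (q : ℕ → ℚ)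
    (hq : Tendsto (fun n => ((q n : ℚ) : ℝ)) atTop (𝓝 x)) :
    ∃ z : ℕ → ℚ, (∀ n, ∃ M, ∀ m, M ≤ m → stmt4_G q (Nat.pair n m) = z n) ∧ IsRhoName z x := by
  have hT : ∀ n : ℕ, ∃ T, ∀ j, T ≤ j → |x - (q j : ℝ)| ≤ (2:ℝ)^(-(n:ℤ)-2) := by
    intro n
    obtain ⟨T, hT⟩ := Metric.tendsto_atTop.mp hq ((2:ℝ)^(-(n:ℤ)-2)) (by positivity)
    refine ⟨T, fun j hj => ?_⟩
    have := hT j hj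
    rw [Real.dist_eq, abs_sub_comm] at this
    linarith
  have hsplit : ∀ n : ℕ, (2:ℝ)^(-(n:ℤ)-1) = (2:ℝ)^(-(n:ℤ)-2) + (2:ℝ)^(-(n:ℤ)-2) := by
    intro n
    have h1 : (-(n:ℤ)-1) = (-(n:ℤ)-2) + 1 := by ring
    rw [h1, zpow_add_one₀ (two_ne_zero)]
    ring
  have hbound : ∀ n, ∃ T, ∀ m, stmt4_t q n m ≤ T := by
    intro n
    obtain ⟨T, hTn⟩ := hT n
    refine ⟨T, fun m => ?_⟩
    rcases le_or_gt m T with h | h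
    · exact (stmt4_t_le q n m).trans h
    · refine Nat.find_min' _ ?_
      intro j hj hTj
      rw [← Rat.cast_le (K := ℝ)]
      push_cast
      have h1 := hTn j hTj
      have h2 := hTn T le_rfl
      have h3 : |(q j : ℝ) - (q T : ℝ)| ≤ |x - (q j:ℝ)| + |x - (q T:ℝ)| := by
        calc |(q j : ℝ) - (q T : ℝ)| = |(x - (q T:ℝ)) - (x - (q j:ℝ))| := by ring_nf
          _ ≤ |x - (q T:ℝ)| + |x - (q j:ℝ)| := abs_sub _ _
          _ = _ := by ring
      rw [hsplit n]
      linarith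
  have hstab : ∀ n, ∃ N, ∀ m, N ≤ m → stmt4_t q n m = stmt4_t q n N := by
    intro n
    obtain ⟨T, hTb⟩ := hbound n
    exact stmt4_monotone_nat_eventually_const (stmt4_t_mono q n) hTb
  choose N hN using hstab
  refine ⟨fun n => q (stmt4_t q n (N n)), fun n => ⟨N n, fun m hm => ?_⟩, ?_⟩
  · show q (stmt4_t q (Nat.pair n m).unpair.1 (Nat.pair n m).unpair.2) = _
    rw [Nat.unpair_pair]
    exact congrArg q (hN n m hm)
  · intro n
    set t0 := stmt4_t q n (N n) with ht0
    have hj : ∀ j, t0 ≤ j → |(q j : ℝ) - (q t0 : ℝ)| ≤ (2:ℝ)^(-(n:ℤ)-1) := by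
      intro j hj0
      have ht : stmt4_t q n (max j (N n)) = t0 := hN n _ (le_max_right _ _)
      have hspec := stmt4_t_spec q n (max j (N n)) j (le_max_left _ _) (ht ▸ hj0)
      rw [ht] at hspec
      rw [← Rat.cast_le (K := ℝ)] at hspec
      push_cast at hspec
      exact hspec
    have tend : Tendsto (fun j => |(q j : ℝ) - (q t0 : ℝ)|) atTop (𝓝 |x - (q t0 : ℝ)|) :=
      (hq.sub tendsto_const_nhds).abs
    have hle : |x - (q t0 : ℝ)| ≤ (2:ℝ)^(-(n:ℤ)-1) :=
      le_of_tendsto tend (Filter.eventually_atTop.mpr ⟨t0, hj⟩)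
    calc |x - (q t0 : ℝ)| ≤ (2:ℝ)^(-(n:ℤ)-1) := hle
      _ ≤ (2:ℝ)^(-(n:ℤ)) := zpow_le_zpow_right₀ one_le_two (by omega)

/-- `ρ ∘ ι'` is continuously equivalent to `ρ'`. -/
theorem stmt4 :
    (∃ F : (ℕ → ℚ) → (ℕ → ℚ),
        ContinuousOn F {q | ∃ x : ℝ, IsRhoJumpName q x} ∧
        ∀ (x : ℝ) (q : ℕ → ℚ), IsRhoJumpName q x → IsRhoPrimeName (F q) x) ∧
    (∃ G : (ℕ → ℚ) → (ℕ → ℚ),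
        ContinuousOn G {q | ∃ x : ℝ, IsRhoPrimeName q x} ∧
        ∀ (x : ℝ) (q : ℕ → ℚ), IsRhoPrimeName q x → IsRhoJumpName (G q) x) := by
  constructor
  · refine ⟨stmt4_F, (stmt4_cont ?_).continuousOn, ?_⟩
    · intro k
      exact ⟨k, fun i => Nat.pair i k, fun q q' h => stmt4_F_coords k q q' h⟩
    · rintro x q ⟨z, hM, hz⟩
      exact stmt4_F_correct x q z hM hz
  · refine ⟨stmt4_G, (stmt4_cont ?_).continuousOn, ?_⟩
    · intro k
      exact ⟨k.unpair.2, id, fun q q' h => stmt4_G_coords k q q' h⟩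
    · intro x q hq
      exact stmt4_G_correct x q hq
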